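/- For every n ≥ 4, the partition (n−2, 2) of n satisfies (n−3)·η_{(n−2,2)} = (n−1)·D_{n−2}; in particular η_{(n−2,2)} > 0. Moreover, for every n ≥ 6, |η_{(n−2,2)}| > |η_{(n−2,1,1)}|. -/

import Mathlib

/-!
Unwinding Renteln's recurrence expresses both eigenvalues through derangement numbers:
`η_{(n-2,2)} = (n-1)(D_{n-4} + D_{n-3})` and `η_{(n-2,1,1)} = (-1)^n + n D_{n-3}`.
The classical recurrence `D_{m+2} = (m+1)(D_m + D_{m+1})` then gives the identity and the
positivity, and for `n ≥ 6` the two eigenvalues are positive and differ by `2 D_{n-4} > 0`.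
-/

/-- Derangement numbers: `D 0 = 1`, `D (m+1) = (m+1) * D m + (-1)^(m+1)`. -/
def derange : ℕ → ℤ
  | 0 => 1
  | n + 1 => (n + 1 : ℤ) * derange n + (-1) ^ (n + 1)

/-- Subtract one from every part and discard the parts that become zero
(deleting the first column of the Ferrers diagram). -/
def strip (l : List ℕ) : List ℕ := (l.map (· - 1)).filter (fun x => 0 < x)

lemma strip_measure (l : List ℕ) : (strip l).sum + (strip l).length ≤ l.sum := by
  induction l with
  | nil => simp [strip]
  | cons x t ih =>
      simp only [strip, List.map_cons, List.filter_cons] at ih ⊢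
      by_cases hx : 0 < x - 1 <;> simp [hx] <;> omega

/-- The eigenvalues of the derangement graph, defined by Renteln's recurrence:
`η ∅ = 1` and `η λ = (-1)^h (η (λ-ĥ) + (-1)^{λ₁} h η (λ-ĉ))`, where
`h = λ₁ + r - 1` is the hook size, `λ-ĥ = strip (tail λ)` removes the hook,
and `λ-ĉ = strip λ` removes the first column. -/
def eta : List ℕ → ℤ
  | [] => 1
  | a :: t =>
      (-1) ^ (a + t.length) *
        (eta (strip t) + (-1) ^ a * ((a : ℤ) + t.length) * eta (strip (a :: t)))
  termination_by l => l.sum + l.length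
  decreasing_by
  · have h1 := strip_measure t
    simp only [List.sum_cons, List.length_cons]
    omega
  · have h1 := strip_measure (a :: t)
    simp only [List.sum_cons, List.length_cons] at h1 ⊢
    omega

/-- `l` is (the list of parts of) a partition of `n`: weakly decreasing,
all parts positive, summing to `n`. -/
def IsPartition (n : ℕ) (l : List ℕ) : Prop :=
  l.Pairwise (· ≥ ·) ∧ (∀ x ∈ l, 0 < x) ∧ l.sum = n

/-- The hook partition `(a, 1^(n-a))` of `n`. -/
def hookP (n a : ℕ) : List ℕ := a :: List.replicate (n - a) 1

lemma derange_succ (m : ℕ) : derange (m + 1) = (m + 1 : ℤ) * derange m + (-1) ^ (m + 1) := rfl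

lemma derange_eq_numDerangements (m : ℕ) : derange m = numDerangements m := by
  induction m with
  | zero => rfl
  | succ m ih => rw [derange_succ, ih, numDerangements_succ, pow_succ]; ring

lemma numDerangements_add_succ_pos (m : ℕ) :
    0 < numDerangements m + numDerangements (m + 1) := by
  induction m with
  | zero => simp
  | succ m ih => rw [numDerangements_add_two]; positivity

lemma numDerangements_pos {m : ℕ} (hm : 2 ≤ m) : 0 < numDerangements m := by
  obtain ⟨k, rfl⟩ := Nat.exists_eq_add_of_le' hm
  rw [numDerangements_add_two]
  exact Nat.mul_pos k.succ_pos (numDerangements_add_succ_pos k)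

lemma eta_nil : eta [] = 1 := by rw [eta]

lemma eta_cons (a : ℕ) (t : List ℕ) : eta (a :: t) =
    (-1) ^ (a + t.length) *
      (eta (strip t) + (-1) ^ a * ((a : ℤ) + t.length) * eta (strip (a :: t))) := by
  rw [eta]

lemma eta_singleton_zero : eta [0] = 1 := by simp [eta_cons, strip, eta_nil]

lemma eta_strip_singleton (m : ℕ) : eta (strip [m + 1]) = eta [m] := by
  cases m with
  | zero => simp [strip, eta_singleton_zero, eta_nil]
  | succ m => simp [strip]

lemma eta_singleton (m : ℕ) : eta [m] = derange m := by
  induction m with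
  | zero => exact eta_singleton_zero
  | succ m ih =>
    rw [eta_cons, eta_strip_singleton, ih, derange_succ, show strip [] = [] from rfl, eta_nil]
    rcases neg_one_pow_eq_or ℤ m with h | h <;>
      simp only [pow_succ, h, List.length_nil] <;> push_cast <;> ring

lemma eta_succ_one (b : ℕ) : eta [b + 1, 1] = (-1) ^ b - ((b : ℤ) + 2) * derange b := by
  have hs : strip [b + 1, 1] = strip [b + 1] := by simp [strip, List.filter_cons]
  have hs₁ : strip [1] = [] := by simp [strip]
  rw [eta_cons, hs, hs₁, eta_strip_singleton, eta_singleton, eta_nil]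
  rcases neg_one_pow_eq_or ℤ b with h | h <;>
    simp only [pow_succ, h, List.length_cons, List.length_nil] <;> push_cast <;> ring

lemma eta_add_two_two (b : ℕ) :
    eta [b + 2, 2] = ((b : ℤ) + 3) * (derange b + derange (b + 1)) := by
  have hs : strip [b + 2, 2] = [b + 1, 1] := by simp [strip]
  have hs₂ : strip [2] = [1] := by simp [strip]
  have h₁ : eta [1] = 0 := by rw [eta_singleton]; rfl
  rw [eta_cons, hs, hs₂, h₁, eta_succ_one, derange_succ]
  rcases neg_one_pow_eq_or ℤ b with h | h <;>
    simp only [pow_succ, h, List.length_cons, List.length_nil] <;> push_cast <;> ring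

lemma eta_add_two_one_one (b : ℕ) :
    eta [b + 2, 1, 1] = (-1) ^ b + ((b : ℤ) + 4) * derange (b + 1) := by
  have hs : strip [b + 2, 1, 1] = [b + 1] := by simp [strip]
  have hs₁ : strip [1, 1] = [] := by simp [strip]
  rw [eta_cons, hs, hs₁, eta_singleton, eta_nil]
  rcases neg_one_pow_eq_or ℤ b with h | h <;>
    simp only [pow_succ, h, List.length_cons, List.length_nil] <;> push_cast <;> ring

/-- For `n ≥ 4`, `(n-3) η_{(n-2,2)} = (n-1) D_{n-2}`, so `η_{(n-2,2)} > 0`;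
for `n ≥ 6`, `|η_{(n-2,2)}| > |η_{(n-2,1,1)}|`. -/
theorem eta_n_minus_two (n : ℕ) (hn : 4 ≤ n) :
    ((n : ℤ) - 3) * eta [n - 2, 2] = ((n : ℤ) - 1) * derange (n - 2) ∧
    0 < eta [n - 2, 2] ∧
    (6 ≤ n → |eta [n - 2, 1, 1]| < |eta [n - 2, 2]|) := by
  obtain ⟨b, rfl⟩ := Nat.exists_eq_add_of_le' hn
  rw [show b + 4 - 2 = b + 2 by omega, eta_add_two_two, eta_add_two_one_one]
  simp only [derange_eq_numDerangements]
  have hpair : (0 : ℤ) < (b + 3) * (numDerangements b + numDerangements (b + 1)) :=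
    mul_pos (by positivity) (by exact_mod_cast numDerangements_add_succ_pos b)
  refine ⟨?_, hpair, fun hb => ?_⟩
  · rw [numDerangements_add_two]
    push_cast
    ring
  · have hy : (1 : ℤ) ≤ numDerangements (b + 1) := by exact_mod_cast numDerangements_pos (by omega)
    have hhook : (0 : ℤ) < (-1) ^ b + (b + 4) * numDerangements (b + 1) := by
      rcases neg_one_pow_eq_or ℤ b with h | h <;> rw [h] <;> nlinarith
    have hgap : (b + 3) * (numDerangements b + numDerangements (b + 1) : ℤ) -
        ((-1) ^ b + (b + 4) * numDerangements (b + 1)) = 2 * numDerangements b := by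
      linear_combination -numDerangements_succ b
    have hx : (0 : ℤ) < numDerangements b := by exact_mod_cast numDerangements_pos (by omega)
    rw [abs_of_pos hhook, abs_of_pos hpair]
    linarith
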